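/- Let φ be a Drinfeld A[t_1,…,t_s]-module of rank r and η a biderivation with η_θ = Σ_{j=1}^ℓ c_jτ^j. Then there exists a unique F_η = Σ_{i≥1} f_iτ^i ∈ τ𝕋_s[[τ]] satisfying F_ηθ − θF_η = η_θ·exp_φ, given explicitly by f_i = (θ^{q^i} − θ)^{−1} Σ_{j=1}^i c_j α_{i−j}^{(j)}; moreover F_η is an entire operator, and for all a ∈ A[t_1,…,t_s], F_η a − aF_η = η_a·exp_φ. -/

import Mathlib

/-!
Comparing coefficients of `τ^i` in `F θ - θ F = η_θ exp_φ` gives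
`(θ^{q^i} - θ) f_i = Σ_j c_j α_{i-j}^{(j)}`, and `θ^{q^i} - θ ≠ 0` because
`|θ^{q^i} - θ| = q^{q^i}`: this is existence, uniqueness and the formula at once. The elements `a`
with `F a - a F = η_a exp_φ` contain `θ` and `𝔽_q[t_1,…,t_s]` and are closed under sums and
products; for products the Leibniz rule `η_{ab} = a η_b + η_a φ_b` is combined with the functional
equation `φ_b exp_φ = exp_φ b`, which follows in the same way from `φ_θ exp_φ = exp_φ θ`, i.e. from
the recursion defining the `α_i`.

For entireness, the Gauss norms `g_i = ‖α_i‖` satisfy `q^{q^i} g_i ≤ Σ_k ‖A_k‖ g_{i-k}^{q^k}`.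
This first gives `g_i ≤ B^{q^i}`, and then, fed back into itself, `g_i ≤ c^{q^i}` for large `i`
and every `c > 0`; the same kind of inequality with the `c_j` in place of the `A_k` passes this
decay on to the `f_i`.
-/
open Filter

noncomputable section

/-- Membership in the Tate algebra `𝕋_s` over `K`: the coefficients tend to `0`
(for every `ε > 0` only finitely many coefficients have norm `≥ ε`). -/
def IsTate (K : Type) [NontriviallyNormedField K] (s : ℕ)
    (f : MvPowerSeries (Fin s) K) : Prop :=
  ∀ ε : ℝ, 0 < ε → {ν : Fin s →₀ ℕ | ε ≤ ‖MvPowerSeries.coeff (R := K) ν f‖}.Finite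

/-- The Gauss norm `‖f‖_∞ = sup_ν |a_ν|` on the Tate algebra. -/
def gaussNorm (K : Type) [NontriviallyNormedField K] (s : ℕ)
    (f : MvPowerSeries (Fin s) K) : ℝ :=
  ⨆ ν : Fin s →₀ ℕ, ‖MvPowerSeries.coeff (R := K) ν f‖

/-- The coefficient-wise twist of a power series induced by a ring endomorphism of `K`. -/
def twPS (K : Type) [NontriviallyNormedField K] (s : ℕ) (τK : K →+* K) :
    MvPowerSeries (Fin s) K →+* MvPowerSeries (Fin s) K :=
  MvPowerSeries.map (σ := Fin s) τK

/-- The subring `𝔽_q[t_1,…,t_s]` of `𝕋_s`: generated by the variables and the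
`𝔽_q`-constants (elements of `K` fixed by the `q`-power map). -/
def FqTSub (K : Type) [NontriviallyNormedField K] (s q : ℕ) :
    Subring (MvPowerSeries (Fin s) K) :=
  Subring.closure
    (Set.range (MvPowerSeries.X : Fin s → MvPowerSeries (Fin s) K) ∪
      {f | ∃ x : K, x ^ q = x ∧ f = MvPowerSeries.C (σ := Fin s) (R := K) x})

/-- The subring `A[t_1,…,t_s] = 𝔽_q[θ][t_1,…,t_s]` of `𝕋_s`. -/
def AtsSub (K : Type) [NontriviallyNormedField K] (s q : ℕ) (θ : K) :
    Subring (MvPowerSeries (Fin s) K) :=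
  Subring.closure
    ({MvPowerSeries.C (σ := Fin s) (R := K) θ} ∪
      Set.range (MvPowerSeries.X : Fin s → MvPowerSeries (Fin s) K) ∪
      {f | ∃ x : K, x ^ q = x ∧ f = MvPowerSeries.C (σ := Fin s) (R := K) x})

/-- Multiplication in the twisted polynomial ring `𝕋_s[τ]` (with `τ f = f^{(1)} τ`),
where a twisted polynomial `Σ_i c_i τ^i` is encoded as the finitely supported
function `i ↦ c_i`. -/
def tmulPS (K : Type) [NontriviallyNormedField K] (s : ℕ)
    (tw : MvPowerSeries (Fin s) K →+* MvPowerSeries (Fin s) K)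
    (f g : ℕ →₀ MvPowerSeries (Fin s) K) : ℕ →₀ MvPowerSeries (Fin s) K :=
  f.sum fun i c => g.sum fun j d => Finsupp.single (i + j) (c * (⇑tw)^[i] d)

/-- Left multiplication of a twisted polynomial by the scalar `c ∈ 𝕋_s`. -/
def cSMul (K : Type) [NontriviallyNormedField K] (s : ℕ)
    (c : MvPowerSeries (Fin s) K) (h : ℕ →₀ MvPowerSeries (Fin s) K) :
    ℕ →₀ MvPowerSeries (Fin s) K :=
  Finsupp.mapRange (fun x => c * x) (mul_zero c) h

/-- `φ : A[t_1,…,t_s] → 𝕋_s[τ]` is the Drinfeld-module structure map: an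
`𝔽_q[t_1,…,t_s]`-algebra homomorphism into the twisted polynomial ring sending
`θ` to `Dθ = θ + A_1 τ + ⋯ + A_r τ^r`. -/
def IsDrinfeldHom (K : Type) [NontriviallyNormedField K] (s q : ℕ) (θ : K)
    (tw : MvPowerSeries (Fin s) K →+* MvPowerSeries (Fin s) K)
    (Dθ : ℕ →₀ MvPowerSeries (Fin s) K)
    (φ : AtsSub K s q θ → (ℕ →₀ MvPowerSeries (Fin s) K)) : Prop :=
  (∀ a b, φ (a + b) = φ a + φ b) ∧
  (∀ a b, φ (a * b) = tmulPS K s tw (φ a) (φ b)) ∧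
  (∀ a : AtsSub K s q θ,
    (a : MvPowerSeries (Fin s) K) = MvPowerSeries.C (σ := Fin s) (R := K) θ → φ a = Dθ) ∧
  (∀ a : AtsSub K s q θ, (a : MvPowerSeries (Fin s) K) ∈ FqTSub K s q →
    φ a = Finsupp.single 0 (a : MvPowerSeries (Fin s) K)) ∧
  (∀ a n, IsTate K s (φ a n))

/-- `η` is a biderivation for `φ`: an `𝔽_q[t_1,…,t_s]`-linear map
`A[t_1,…,t_s] → τ𝕋_s[τ]` with `η_{ab} = a η_b + η_a φ_b`. -/
def IsBider (K : Type) [NontriviallyNormedField K] (s q : ℕ) (θ : K)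
    (tw : MvPowerSeries (Fin s) K →+* MvPowerSeries (Fin s) K)
    (φ : AtsSub K s q θ → (ℕ →₀ MvPowerSeries (Fin s) K))
    (η : AtsSub K s q θ → (ℕ →₀ MvPowerSeries (Fin s) K)) : Prop :=
  (∀ a b, η (a + b) = η a + η b) ∧
  (∀ v a : AtsSub K s q θ, (v : MvPowerSeries (Fin s) K) ∈ FqTSub K s q →
    η (v * a) = cSMul K s (v : MvPowerSeries (Fin s) K) (η a)) ∧
  (∀ a, η a 0 = 0) ∧
  (∀ a n, IsTate K s (η a n)) ∧
  (∀ a b, η (a * b)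
    = cSMul K s (a : MvPowerSeries (Fin s) K) (η b) + tmulPS K s tw (η a) (φ b))
open Finset Topology
open MvPowerSeries (C coeff)

section

variable {K : Type} [NontriviallyNormedField K] {s : ℕ}

local notation "R" => MvPowerSeries (Fin s) K

section Tate

lemma isTate_iff_tendsto {f : R} :
    IsTate K s f ↔ Tendsto (fun ν => coeff ν f) cofinite (𝓝 0) := by
  simp only [IsTate, Metric.tendsto_nhds, dist_zero_right, Filter.eventually_cofinite, not_lt]

lemma isTate_iff_isRestricted {f : R} : IsTate K s f ↔ MvPowerSeries.IsRestricted 1 f := by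
  simp [isTate_iff_tendsto, MvPowerSeries.IsRestricted, Finsupp.prod,
    tendsto_zero_iff_norm_tendsto_zero]

lemma isTate_C (x : K) : IsTate K s (C x) :=
  isTate_iff_isRestricted.2 (MvPowerSeries.isRestricted_C 1 x)

variable [IsUltrametricDist K]

lemma IsTate.mul {f g : R} (hf : IsTate K s f) (hg : IsTate K s g) : IsTate K s (f * g) :=
  isTate_iff_isRestricted.2 <| MvPowerSeries.isRestricted.mul 1 (isTate_iff_isRestricted.1 hf)
    (isTate_iff_isRestricted.1 hg)

lemma isTate_sum {ι : Type*} (t : Finset ι) {f : ι → R} (hf : ∀ i ∈ t, IsTate K s (f i)) :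
    IsTate K s (∑ i ∈ t, f i) := by
  simp only [isTate_iff_isRestricted] at hf ⊢
  exact (MvPowerSeries.IsRestricted.subring 1).sum_mem hf

end Tate

section Twist

variable {q : ℕ} {τ : K →+* K}

lemma coeff_iterate_twPS (hτ : ∀ x, τ x = x ^ q) (k : ℕ) (f : R) (ν : Fin s →₀ ℕ) :
    coeff ν ((⇑(twPS K s τ))^[k] f) = coeff ν f ^ q ^ k := by
  induction k with
  | zero => simp
  | succ k ih =>
    unfold twPS at *
    rw [Function.iterate_succ_apply', MvPowerSeries.coeff_map, ih, hτ, ← pow_mul, pow_succ]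

lemma iterate_twPS_C (hτ : ∀ x, τ x = x ^ q) (k : ℕ) (x : K) :
    (⇑(twPS K s τ))^[k] (C x) = C (x ^ q ^ k) := by
  induction k with
  | zero => simp
  | succ k ih =>
    rw [Function.iterate_succ_apply', ih, twPS, MvPowerSeries.map_C, hτ, ← pow_mul, pow_succ]

lemma twPS_eq_self_of_mem_FqTSub (hτ : ∀ x, τ x = x ^ q) {f : R} (hf : f ∈ FqTSub K s q) :
    twPS K s τ f = f := by
  induction hf using Subring.closure_induction with
  | mem f hf =>
    rcases hf with ⟨i, rfl⟩ | ⟨x, hx, rfl⟩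
    · exact MvPowerSeries.map_X _ _
    · rw [twPS, MvPowerSeries.map_C, hτ, hx]
  | zero => exact map_zero _
  | one => exact map_one _
  | add f g _ _ hf hg => rw [map_add, hf, hg]
  | neg f _ hf => rw [map_neg, hf]
  | mul f g _ _ hf hg => rw [map_mul, hf, hg]

lemma IsTate.iterate_twPS (hτ : ∀ x, τ x = x ^ q) (hq : 0 < q) {f : R} (hf : IsTate K s f)
    (k : ℕ) : IsTate K s ((⇑(twPS K s τ))^[k] f) := by
  rw [isTate_iff_tendsto] at hf ⊢
  simp_rw [coeff_iterate_twPS hτ]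
  simpa [zero_pow (pow_pos hq k).ne'] using hf.pow (q ^ k)

end Twist

section GaussNorm

lemma IsTate.bddAbove {f : R} (hf : IsTate K s f) :
    BddAbove (Set.range fun ν => ‖coeff ν f‖) :=
  (isTate_iff_tendsto.1 hf).norm.bddAbove_range_of_cofinite

lemma coeff_le_gaussNorm {f : R} (hf : IsTate K s f) (ν : Fin s →₀ ℕ) :
    ‖coeff ν f‖ ≤ gaussNorm K s f :=
  le_ciSup hf.bddAbove ν

lemma gaussNorm_le {f : R} {b : ℝ} (h : ∀ ν, ‖coeff ν f‖ ≤ b) : gaussNorm K s f ≤ b :=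
  ciSup_le h

lemma gaussNorm_nonneg (f : R) : 0 ≤ gaussNorm K s f :=
  Real.iSup_nonneg fun _ => norm_nonneg _

lemma gaussNorm_zero : gaussNorm K s (0 : R) = 0 := by
  simp [gaussNorm]

lemma gaussNorm_C_mul (x : K) (f : R) : gaussNorm K s (C x * f) = ‖x‖ * gaussNorm K s f := by
  simp only [gaussNorm, MvPowerSeries.coeff_C_mul, norm_mul,
    Real.mul_iSup_of_nonneg (norm_nonneg x)]

lemma gaussNorm_sum_le {ι : Type*} (t : Finset ι) {f : ι → R}
    (hf : ∀ i ∈ t, IsTate K s (f i)) :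
    gaussNorm K s (∑ i ∈ t, f i) ≤ ∑ i ∈ t, gaussNorm K s (f i) :=
  gaussNorm_le fun ν => by
    rw [map_sum]
    exact (norm_sum_le _ _).trans (sum_le_sum fun i hi => coeff_le_gaussNorm (hf i hi) ν)

lemma gaussNorm_mul_le [IsUltrametricDist K] {f g : R} (hf : IsTate K s f) (hg : IsTate K s g) :
    gaussNorm K s (f * g) ≤ gaussNorm K s f * gaussNorm K s g := by
  have key := MvPowerSeries.gaussNorm_mul_le (fun x : K => ‖x‖) 1 f g zero_le_one
    (fun _ => norm_nonneg _) norm_mul_le IsUltrametricDist.isNonarchimedean_norm norm_zero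
    (by simpa [MvPowerSeries.HasGaussNorm, Finsupp.prod] using hf.bddAbove)
    (by simpa [MvPowerSeries.HasGaussNorm, Finsupp.prod] using hg.bddAbove)
  simpa [gaussNorm, MvPowerSeries.gaussNorm, Finsupp.prod] using key

lemma gaussNorm_iterate_twPS_le {q : ℕ} {τ : K →+* K} (hτ : ∀ x, τ x = x ^ q) {f : R}
    (hf : IsTate K s f) (k : ℕ) :
    gaussNorm K s ((⇑(twPS K s τ))^[k] f) ≤ gaussNorm K s f ^ q ^ k :=
  gaussNorm_le fun ν => by
    rw [coeff_iterate_twPS hτ, norm_pow]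
    exact pow_le_pow_left₀ (norm_nonneg _) (coeff_le_gaussNorm hf ν) _

end GaussNorm

section TwistedSeries

variable (tw : MvPowerSeries (Fin s) K →+* MvPowerSeries (Fin s) K)

/-- The coefficient of `τ^m` in `h · Σ_i α_i τ^i`; thus `tmulSeries tw (η a) α` is `η_a exp_φ`. -/
def tmulSeries (h : ℕ →₀ R) (α : ℕ → R) (m : ℕ) : R :=
  ∑ k ∈ range (m + 1), h k * (⇑tw)^[k] (α (m - k))

lemma tmulPS_apply (f g : ℕ →₀ R) (k : ℕ) :
    tmulPS K s tw f g k = ∑ i ∈ range (k + 1), f i * (⇑tw)^[i] (g (k - i)) := by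
  classical
  have inner : ∀ i, (g.sum fun j d => Finsupp.single (i + j) (f i * (⇑tw)^[i] d)) k
      = if i ≤ k then f i * (⇑tw)^[i] (g (k - i)) else 0 := by
    intro i
    rw [Finsupp.sum_apply, Finsupp.sum]
    split_ifs with hik
    · rw [sum_eq_single (k - i)]
      · simp [Nat.add_sub_cancel' hik]
      · intro j _ hj
        exact Finsupp.single_eq_of_ne (by omega)
      · intro hj
        simp [Finsupp.notMem_support_iff.1 hj]
    · exact sum_eq_zero fun j _ => Finsupp.single_eq_of_ne (by omega)
  rw [tmulPS, Finsupp.sum_apply, Finsupp.sum, sum_congr rfl fun i _ => inner i]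
  set T : ℕ → R := fun i => if i ≤ k then f i * (⇑tw)^[i] (g (k - i)) else 0
  calc ∑ i ∈ f.support, T i = ∑ i ∈ f.support ∪ range (k + 1), T i :=
        sum_subset subset_union_left fun i _ hi => by simp [T, Finsupp.notMem_support_iff.1 hi]
    _ = ∑ i ∈ range (k + 1), T i :=
        (sum_subset subset_union_right fun i _ hi =>
          if_neg (by simpa [Nat.lt_succ_iff] using hi)).symm
    _ = _ := sum_congr rfl fun i hi => if_pos (by simpa [Nat.lt_succ_iff] using hi)

lemma tmulSeries_tmulPS (f g : ℕ →₀ R) (α : ℕ → R) :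
    tmulSeries tw (tmulPS K s tw f g) α = tmulSeries tw f (tmulSeries tw g α) := by
  funext m
  let T : ℕ → ℕ → R := fun i j => f i * (⇑tw)^[i] (g j) * (⇑tw)^[i + j] (α (m - (i + j)))
  calc tmulSeries tw (tmulPS K s tw f g) α m
      = ∑ k ∈ range (m + 1), ∑ i ∈ range (k + 1), T i (k - i) := by
        refine sum_congr rfl fun k _ => ?_
        rw [tmulPS_apply, sum_mul]
        refine sum_congr rfl fun i hi => ?_
        simp only [T, Nat.add_sub_cancel' (by simpa [Nat.lt_succ_iff] using hi : i ≤ k)]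
    _ = ∑ i ∈ range (m + 1), ∑ j ∈ range (m + 1 - i), T i j := sum_range_diag_flip _ _
    _ = tmulSeries tw f (tmulSeries tw g α) m := by
        refine sum_congr rfl fun i hi => ?_
        rw [tmulSeries, ← RingHom.coe_pow, map_sum, mul_sum,
          Nat.sub_add_comm (by simpa [Nat.lt_succ_iff] using hi)]
        refine sum_congr rfl fun j _ => ?_
        simp only [T, map_mul, RingHom.coe_pow, ← Function.iterate_add_apply, Nat.sub_sub,
          mul_assoc]

@[simp] lemma tmulSeries_zero (α : ℕ → R) : tmulSeries tw 0 α = 0 := by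
  funext m; simp [tmulSeries]

lemma tmulSeries_add (h₁ h₂ : ℕ →₀ R) (α : ℕ → R) :
    tmulSeries tw (h₁ + h₂) α = tmulSeries tw h₁ α + tmulSeries tw h₂ α := by
  funext m; simp [tmulSeries, add_mul, sum_add_distrib]

lemma tmulSeries_cSMul (c : R) (h : ℕ →₀ R) (α : ℕ → R) (m : ℕ) :
    tmulSeries tw (cSMul K s c h) α m = c * tmulSeries tw h α m := by
  simp [tmulSeries, cSMul, mul_sum, mul_assoc]

lemma tmulSeries_single_zero (c : R) (α : ℕ → R) (m : ℕ) :
    tmulSeries tw (Finsupp.single 0 c) α m = c * α m := by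
  rw [tmulSeries, sum_eq_single 0 (fun k _ hk => by simp [Finsupp.single_eq_of_ne hk])
    (by simp)]
  simp

lemma tmulSeries_eq_add_sum_Icc (h : ℕ →₀ R) (α : ℕ → R) (m : ℕ) :
    tmulSeries tw h α m = h 0 * α m + ∑ k ∈ Icc 1 m, h k * (⇑tw)^[k] (α (m - k)) := by
  rw [tmulSeries, range_eq_Ico, sum_eq_sum_Ico_succ_bot (Nat.succ_pos m)]
  rfl

lemma tmulSeries_tmulPS_of_eq {g : ℕ →₀ R} {α : ℕ → R} {b : R}
    (hg : ∀ m, tmulSeries tw g α m = α m * (⇑tw)^[m] b) (f : ℕ →₀ R) (m : ℕ) :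
    tmulSeries tw (tmulPS K s tw f g) α m = tmulSeries tw f α m * (⇑tw)^[m] b := by
  rw [tmulSeries_tmulPS, tmulSeries, tmulSeries, sum_mul]
  refine sum_congr rfl fun i hi => ?_
  rw [hg, iterate_map_mul, ← Function.iterate_add_apply,
    Nat.add_sub_cancel' (by simpa [Nat.lt_succ_iff] using hi), mul_assoc]

lemma tmulPS_single_zero_one (h : ℕ →₀ R) : tmulPS K s tw h (Finsupp.single 0 1) = h := by
  ext k
  rw [tmulPS_apply, sum_eq_single k]
  · simp
  · intro i hi hik
    have : k - i ≠ 0 := by simp at hi; omega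
    simp [Finsupp.single_eq_of_ne this]
  · simp

lemma cSMul_one (h : ℕ →₀ R) : cSMul K s 1 h = h := by
  ext k; simp [cSMul]

end TwistedSeries

section Drinfeld

variable {q : ℕ} {θ : K} {tw : MvPowerSeries (Fin s) K →+* MvPowerSeries (Fin s) K}
  {Dθ : ℕ →₀ MvPowerSeries (Fin s) K} {φ η : AtsSub K s q θ → (ℕ →₀ MvPowerSeries (Fin s) K)}

theorem AtsSub.induction_on {P : AtsSub K s q θ → Prop} (a : AtsSub K s q θ)
    (theta : ∀ a : AtsSub K s q θ, (a : R) = C θ → P a)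
    (const : ∀ a : AtsSub K s q θ, (a : R) ∈ FqTSub K s q → P a)
    (add : ∀ a b, P a → P b → P (a + b)) (mul : ∀ a b, P a → P b → P (a * b)) : P a := by
  obtain ⟨x, hx⟩ := a
  induction hx using Subring.closure_induction with
  | mem x hx =>
    rcases hx with (hx | hx) | hx
    · exact theta _ hx
    · exact const _ (Subring.subset_closure (Or.inl hx))
    · exact const _ (Subring.subset_closure (Or.inr hx))
  | zero => exact const _ (zero_mem _)
  | one => exact const _ (one_mem _)
  | add x y _ _ hx hy => exact add _ _ hx hy
  | neg x _ hx =>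
    convert mul ⟨-1, neg_mem (one_mem _)⟩ _ (const _ (neg_mem (one_mem _))) hx using 1
    exact Subtype.ext (neg_one_mul x).symm
  | mul x y _ _ hx hy => exact mul _ _ hx hy

lemma IsDrinfeldHom.map_one (hφ : IsDrinfeldHom K s q θ tw Dθ φ) :
    φ 1 = Finsupp.single 0 1 := by
  simpa using hφ.2.2.2.1 1 (one_mem _)

lemma IsBider.map_one (hφ : IsDrinfeldHom K s q θ tw Dθ φ) (hη : IsBider K s q θ tw φ η) :
    η 1 = 0 := by
  have h := hη.2.2.2.2 1 1
  rwa [mul_one, hφ.map_one, tmulPS_single_zero_one, OneMemClass.coe_one, cSMul_one,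
    left_eq_add] at h

lemma IsBider.eq_zero_of_mem_FqTSub (hφ : IsDrinfeldHom K s q θ tw Dθ φ)
    (hη : IsBider K s q θ tw φ η) {a : AtsSub K s q θ} (ha : (a : R) ∈ FqTSub K s q) :
    η a = 0 := by
  simpa [IsBider.map_one hφ hη, cSMul] using hη.2.1 a 1 ha

end Drinfeld

section FunctionalEquation

variable {q r : ℕ} {θ : K} {tw : MvPowerSeries (Fin s) K →+* MvPowerSeries (Fin s) K}
  {Dθ : ℕ →₀ MvPowerSeries (Fin s) K} {φ η : AtsSub K s q θ → (ℕ →₀ MvPowerSeries (Fin s) K)}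
  {α : ℕ → MvPowerSeries (Fin s) K}

lemma tmulSeries_eq_of_rec (hDθ0 : Dθ 0 = C θ) (hDθtop : ∀ n, r < n → Dθ n = 0) (hα0 : α 0 = 1)
    (hαrec : ∀ i, 1 ≤ i → (C (θ ^ q ^ i) - C θ) * α i
      = ∑ k ∈ Icc 1 r, if k ≤ i then Dθ k * (⇑tw)^[k] (α (i - k)) else 0)
    (m : ℕ) : tmulSeries tw Dθ α m = α m * C (θ ^ q ^ m) := by
  rcases Nat.eq_zero_or_pos m with rfl | hm
  · simp [tmulSeries, hα0, hDθ0]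
  have htrunc : ∑ k ∈ Icc 1 r, (if k ≤ m then Dθ k * (⇑tw)^[k] (α (m - k)) else 0)
      = ∑ k ∈ Icc 1 m, Dθ k * (⇑tw)^[k] (α (m - k)) := by
    rw [← sum_filter]
    refine sum_subset (fun k hk => by simp only [mem_filter, mem_Icc] at hk ⊢; omega)
      fun k hk hk' => ?_
    simp only [mem_filter, mem_Icc] at hk hk'
    rw [hDθtop k (by omega), zero_mul]
  rw [tmulSeries_eq_add_sum_Icc, ← htrunc, ← hαrec m hm, hDθ0]
  ring

lemma tmulSeries_phi (htw : ∀ x ∈ FqTSub K s q, tw x = x) (hφ : IsDrinfeldHom K s q θ tw Dθ φ)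
    (hexp : ∀ m, tmulSeries tw Dθ α m = α m * (⇑tw)^[m] (C θ)) (b : AtsSub K s q θ) (m : ℕ) :
    tmulSeries tw (φ b) α m = α m * (⇑tw)^[m] b := by
  induction b using AtsSub.induction_on generalizing m with
  | theta a ha => rw [hφ.2.2.1 a ha, ha, hexp]
  | const a ha =>
    rw [hφ.2.2.2.1 a ha, tmulSeries_single_zero, Function.iterate_fixed (htw _ ha), mul_comm]
  | add a b ha hb =>
    rw [hφ.1, tmulSeries_add, Pi.add_apply, ha, hb, AddMemClass.coe_add, iterate_map_add,
      mul_add]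
  | mul a b ha hb =>
    rw [hφ.2.1, tmulSeries_tmulPS_of_eq _ hb, ha, MulMemClass.coe_mul, iterate_map_mul,
      mul_assoc]

lemma comm_sub_eq_tmulSeries (htw : ∀ x ∈ FqTSub K s q, tw x = x)
    (hφ : IsDrinfeldHom K s q θ tw Dθ φ) (hη : IsBider K s q θ tw φ η)
    (hexp : ∀ m, tmulSeries tw Dθ α m = α m * (⇑tw)^[m] (C θ))
    {θD : AtsSub K s q θ} (hθD : (θD : R) = C θ) {F : ℕ → R}
    (hF : ∀ n, F n * (⇑tw)^[n] (C θ) - C θ * F n = tmulSeries tw (η θD) α n)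
    (a : AtsSub K s q θ) (n : ℕ) :
    F n * (⇑tw)^[n] a - a * F n = tmulSeries tw (η a) α n := by
  induction a using AtsSub.induction_on generalizing n with
  | theta a ha =>
    obtain rfl : a = θD := Subtype.ext (ha.trans hθD.symm)
    rw [ha, hF]
  | const a ha =>
    rw [hη.eq_zero_of_mem_FqTSub hφ ha, tmulSeries_zero, Function.iterate_fixed (htw _ ha),
      mul_comm, sub_self, Pi.zero_apply]
  | add a b ha hb =>
    rw [hη.1, tmulSeries_add, Pi.add_apply, ← ha, ← hb, AddMemClass.coe_add, iterate_map_add]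
    ring
  | mul a b ha hb =>
    rw [hη.2.2.2.2, tmulSeries_add, Pi.add_apply, tmulSeries_cSMul,
      tmulSeries_tmulPS_of_eq _ (tmulSeries_phi htw hφ hexp b), ← ha, ← hb, MulMemClass.coe_mul,
      iterate_map_mul]
    ring

end FunctionalEquation

section Decay

variable {q : ℕ}

/-- `G_i ^ (1 / q^i) → 0`: for `G_i = ‖F_i‖` this is `q^{-i} ord_∞ F_i → ∞`. -/
def IsEntire (q : ℕ) (G : ℕ → ℝ) : Prop := ∀ c : ℝ, 0 < c → ∀ᶠ i in atTop, G i ≤ c ^ q ^ i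

lemma eventually_le_pow_pow (hq : 1 < q) {x : ℝ} (hx : 1 < x) (b : ℝ) :
    ∀ᶠ i in atTop, b ≤ x ^ q ^ i :=
  ((tendsto_pow_atTop_atTop_of_one_lt hx).comp
    (tendsto_pow_atTop_atTop_of_one_lt hq)).eventually_ge_atTop b

lemma sum_mul_pow_pow_le {G D : ℕ → ℝ} {S : Finset ℕ} {b : ℝ} {i : ℕ} (hG : ∀ j, 0 ≤ G j)
    (hD : ∀ k, 0 ≤ D k) (h : ∀ k ∈ S, k ≤ i ∧ G (i - k) ≤ b ^ q ^ (i - k)) :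
    ∑ k ∈ S, D k * G (i - k) ^ q ^ k ≤ (∑ k ∈ S, D k) * b ^ q ^ i := by
  rw [sum_mul]
  refine sum_le_sum fun k hk => mul_le_mul_of_nonneg_left ?_ (hD k)
  calc G (i - k) ^ q ^ k ≤ (b ^ q ^ (i - k)) ^ q ^ k := pow_le_pow_left₀ (hG _) (h k hk).2 _
    _ = b ^ q ^ i := by rw [← pow_mul, ← pow_add, Nat.sub_add_cancel (h k hk).1]

lemma exists_le_pow_pow_of_rec (hq : 1 < q) {G D : ℕ → ℝ} {S : Finset ℕ}
    (hS : ∀ k ∈ S, 1 ≤ k) (hG : ∀ i, 0 ≤ G i) (hD : ∀ k, 0 ≤ D k)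
    (hrec : ∀ᶠ i in atTop, (q : ℝ) ^ q ^ i * G i ≤ ∑ k ∈ S, D k * G (i - k) ^ q ^ k) :
    ∃ B : ℝ, 0 ≤ B ∧ ∀ i, G i ≤ B ^ q ^ i := by
  have hq' : (1 : ℝ) < q := by exact_mod_cast hq
  obtain ⟨N, hN⟩ := eventually_atTop.1 <| hrec.and <|
    (eventually_le_pow_pow hq hq' (∑ k ∈ S, D k)).and (eventually_ge_atTop (S.sup id))
  set B := 1 + ∑ j ∈ range N, G j
  have hB : 1 ≤ B := le_add_of_nonneg_right (sum_nonneg fun j _ => hG j)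
  refine ⟨B, zero_le_one.trans hB, fun i => ?_⟩
  induction i using Nat.strong_induction_on with
  | _ i ih =>
    rcases lt_or_ge i N with hi | hi
    · calc G i ≤ B := (single_le_sum (fun j _ => hG j) (mem_range.2 hi)).trans
            (le_add_of_nonneg_left zero_le_one)
        _ ≤ B ^ q ^ i := le_self_pow₀ hB (pow_pos (by omega) i).ne'
    obtain ⟨hrec, hDq, hSi⟩ := hN i hi
    have hsum := sum_mul_pow_pow_le (b := B) hG hD fun k hk =>
      have hki : k ≤ i := (le_sup (f := id) hk : k ≤ S.sup id).trans hSi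
      ⟨hki, ih _ (by have := hS k hk; omega)⟩
    refine le_of_mul_le_mul_left ?_ (pow_pos (zero_lt_one.trans hq') (q ^ i))
    exact hrec.trans (hsum.trans (mul_le_mul_of_nonneg_right hDq (by positivity)))

lemma eventually_le_pow_pow_of_rec (hq : 1 < q) {G H D : ℕ → ℝ} {S : Finset ℕ} {c ρ : ℝ}
    (hc : 0 ≤ c) (hρ : 1 < q * ρ) (hG0 : ∀ i, 0 ≤ G i) (hD : ∀ k, 0 ≤ D k)
    (hG : ∀ᶠ i in atTop, G i ≤ c ^ q ^ i)
    (hrec : ∀ᶠ i in atTop, (q : ℝ) ^ q ^ i * H i ≤ ∑ k ∈ S, D k * G (i - k) ^ q ^ k) :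
    ∀ᶠ i in atTop, H i ≤ (ρ * c) ^ q ^ i := by
  obtain ⟨N, hN⟩ := eventually_atTop.1 hG
  filter_upwards [hrec, eventually_le_pow_pow hq hρ (∑ k ∈ S, D k),
    eventually_ge_atTop (N + S.sup id)] with i hrec hDq hi
  have hsum := sum_mul_pow_pow_le (b := c) hG0 hD fun k hk =>
    have hk' : k ≤ S.sup id := le_sup (f := id) hk
    ⟨by omega, hN (i - k) (by omega)⟩
  have hq0 : (0 : ℝ) < (q : ℝ) ^ q ^ i := pow_pos (by exact_mod_cast (by omega : 0 < q)) _
  refine le_of_mul_le_mul_left ?_ hq0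
  calc (q : ℝ) ^ q ^ i * H i ≤ (∑ k ∈ S, D k) * c ^ q ^ i := hrec.trans hsum
    _ ≤ (q * ρ) ^ q ^ i * c ^ q ^ i := mul_le_mul_of_nonneg_right hDq (by positivity)
    _ = (q : ℝ) ^ q ^ i * (ρ * c) ^ q ^ i := by rw [mul_pow, mul_pow, mul_assoc]

lemma isEntire_of_rec (hq : 1 < q) {G D : ℕ → ℝ} {S : Finset ℕ}
    (hS : ∀ k ∈ S, 1 ≤ k) (hG : ∀ i, 0 ≤ G i) (hD : ∀ k, 0 ≤ D k)
    (hrec : ∀ᶠ i in atTop, (q : ℝ) ^ q ^ i * G i ≤ ∑ k ∈ S, D k * G (i - k) ^ q ^ k) :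
    IsEntire q G := by
  obtain ⟨B, hB0, hB⟩ := exists_le_pow_pow_of_rec hq hS hG hD hrec
  -- each pass through the recursion shrinks the base by any factor `ρ > 1 / q`
  have hρ : 1 < (q : ℝ) * (2 / 3) := by
    have : (2 : ℝ) ≤ q := by exact_mod_cast hq
    linarith
  have hshrink : ∀ n : ℕ, ∀ᶠ i in atTop, G i ≤ ((2 / 3) ^ n * B) ^ q ^ i := by
    intro n
    induction n with
    | zero => simpa using Eventually.of_forall (f := atTop) hB
    | succ n ih =>
      simpa [pow_succ', mul_assoc] using
        eventually_le_pow_pow_of_rec hq (by positivity) hρ hG hD ih hrec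
  intro c hc
  obtain ⟨n, hn⟩ := ((tendsto_pow_atTop_nhds_zero_of_lt_one (by norm_num) (by norm_num :
    (2 / 3 : ℝ) < 1)).mul_const B |>.eventually (gt_mem_nhds (by simpa using hc))).exists
  exact (hshrink n).mono fun i hi => hi.trans (pow_le_pow_left₀ (by positivity) hn.le _)

lemma IsEntire.eventually_le_rpow (hq : 0 < q) {G : ℕ → ℝ} (hG : IsEntire q G) (M : ℝ) :
    ∃ N : ℕ, ∀ i ≥ N, G i ≤ (q : ℝ) ^ (-(M * (q : ℝ) ^ i)) := by
  have hq' : (0 : ℝ) < q := by exact_mod_cast hq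
  refine eventually_atTop.1 ((hG _ (Real.rpow_pos_of_pos hq' (-M))).mono fun i hi => ?_)
  rwa [← Real.rpow_natCast, ← Real.rpow_mul hq'.le, Nat.cast_pow, neg_mul] at hi

end Decay

section Estimates

variable [IsUltrametricDist K] {q : ℕ} {θ : K} {τ : K →+* K}

lemma norm_pow_sub_self {x : K} (hx : 1 < ‖x‖) {n : ℕ} (hn : 2 ≤ n) :
    ‖x ^ n - x‖ = ‖x‖ ^ n := by
  have hlt : ‖-x‖ < ‖x ^ n‖ := by
    rw [norm_neg, norm_pow]
    simpa using pow_lt_pow_right₀ hx (by omega : 1 < n)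
  rw [sub_eq_add_neg, IsUltrametricDist.norm_add_eq_max_of_norm_ne_norm hlt.ne',
    max_eq_left hlt.le, norm_pow]

lemma norm_pow_pow_sub_self (hq : 2 ≤ q) (hθ : ‖θ‖ = q) {i : ℕ} (hi : 1 ≤ i) :
    ‖θ ^ q ^ i - θ‖ = (q : ℝ) ^ q ^ i := by
  rw [norm_pow_sub_self (by rw [hθ]; exact_mod_cast hq) ?_, hθ]
  calc 2 ≤ q := hq
    _ ≤ q ^ i := Nat.le_self_pow (by omega) q

lemma C_pow_pow_sub_C_mul_eq_iff (hq : 2 ≤ q) (hθ : ‖θ‖ = q) {i : ℕ} (hi : 1 ≤ i) {x y : R} :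
    (C (θ ^ q ^ i) - C θ) * x = y ↔ x = C (θ ^ q ^ i - θ)⁻¹ * y := by
  have hd : θ ^ q ^ i - θ ≠ 0 := by
    rw [← norm_pos_iff, norm_pow_pow_sub_self hq hθ hi]
    positivity
  rw [← map_sub]
  constructor
  · rintro rfl
    rw [← mul_assoc, ← map_mul, inv_mul_cancel₀ hd, map_one, one_mul]
  · rintro rfl
    rw [← mul_assoc, ← map_mul, mul_inv_cancel₀ hd, map_one, one_mul]

lemma pow_pow_mul_gaussNorm_le (hq : 2 ≤ q) (hθ : ‖θ‖ = q) (hτ : ∀ x, τ x = x ^ q)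
    {i : ℕ} (hi : 1 ≤ i) {S : Finset ℕ} {x : R} {y z : ℕ → R}
    (hy : ∀ k ∈ S, IsTate K s (y k)) (hz : ∀ k ∈ S, IsTate K s (z k))
    (h : (C (θ ^ q ^ i) - C θ) * x = ∑ k ∈ S, y k * (⇑(twPS K s τ))^[k] (z k)) :
    (q : ℝ) ^ q ^ i * gaussNorm K s x
      ≤ ∑ k ∈ S, gaussNorm K s (y k) * gaussNorm K s (z k) ^ q ^ k := by
  have hzτ : ∀ k ∈ S, IsTate K s ((⇑(twPS K s τ))^[k] (z k)) :=
    fun k hk => (hz k hk).iterate_twPS hτ (by omega) k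
  rw [← norm_pow_pow_sub_self hq hθ hi, ← gaussNorm_C_mul, map_sub, h]
  refine (gaussNorm_sum_le _ fun k hk => (hy k hk).mul (hzτ k hk)).trans
    (sum_le_sum fun k hk => ?_)
  exact (gaussNorm_mul_le (hy k hk) (hzτ k hk)).trans
    (mul_le_mul_of_nonneg_left (gaussNorm_iterate_twPS_le hτ (hz k hk) k) (gaussNorm_nonneg _))

lemma isEntire_gaussNorm_of_rec {r : ℕ} (hq : 2 ≤ q) (hθ : ‖θ‖ = q) (hτ : ∀ x, τ x = x ^ q)
    {Dθ : ℕ →₀ R} (hDθ : ∀ n, IsTate K s (Dθ n)) {α : ℕ → R} (hα : ∀ i, IsTate K s (α i))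
    (hαrec : ∀ i, 1 ≤ i → (C (θ ^ q ^ i) - C θ) * α i
      = ∑ k ∈ Icc 1 r, if k ≤ i then Dθ k * (⇑(twPS K s τ))^[k] (α (i - k)) else 0) :
    IsEntire q fun i => gaussNorm K s (α i) := by
  refine isEntire_of_rec (S := Icc 1 r) hq (fun k hk => (mem_Icc.1 hk).1)
    (fun _ => gaussNorm_nonneg _) (fun k => gaussNorm_nonneg (Dθ k)) ?_
  filter_upwards [eventually_ge_atTop 1] with i hi
  have h := hαrec i hi
  rw [← sum_filter] at h
  exact (pow_pow_mul_gaussNorm_le hq hθ hτ hi (fun k _ => hDθ k) (fun k _ => hα _) h).trans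
    (sum_le_sum_of_subset_of_nonneg (filter_subset _ _) fun k _ _ =>
      mul_nonneg (gaussNorm_nonneg _) (pow_nonneg (gaussNorm_nonneg _) _))

lemma isEntire_gaussNorm_of_eq (hq : 2 ≤ q) (hθ : ‖θ‖ = q) (hτ : ∀ x, τ x = x ^ q)
    {h : ℕ →₀ R} (hh : ∀ n, IsTate K s (h n)) {α : ℕ → R} (hα : ∀ i, IsTate K s (α i))
    (hαent : IsEntire q fun i => gaussNorm K s (α i)) {F : ℕ → R}
    (hF : ∀ i, (C (θ ^ q ^ i) - C θ) * F i
      = ∑ j ∈ Icc 1 i, h j * (⇑(twPS K s τ))^[j] (α (i - j))) :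
    IsEntire q fun i => gaussNorm K s (F i) := by
  intro c hc
  have hrec : ∀ᶠ i in atTop, (q : ℝ) ^ q ^ i * gaussNorm K s (F i)
      ≤ ∑ j ∈ h.support, gaussNorm K s (h j) * gaussNorm K s (α (i - j)) ^ q ^ j := by
    filter_upwards [eventually_ge_atTop 1] with i hi
    refine (pow_pow_mul_gaussNorm_le hq hθ hτ hi (fun j _ => hh j) (fun j _ => hα _)
      (hF i)).trans ?_
    rw [← sum_filter_of_ne (p := (· ∈ h.support)) fun j _ hj => ?_]
    · exact sum_le_sum_of_subset_of_nonneg (fun j hj => (mem_filter.1 hj).2) fun j _ _ =>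
        mul_nonneg (gaussNorm_nonneg _) (pow_nonneg (gaussNorm_nonneg _) _)
    · rw [Finsupp.mem_support_iff]
      rintro h0
      rw [h0, gaussNorm_zero, zero_mul] at hj
      exact hj rfl
  have hρ : 1 < (q : ℝ) * 1 := by rw [mul_one]; exact_mod_cast hq
  simpa using eventually_le_pow_pow_of_rec hq hc.le hρ (fun _ => gaussNorm_nonneg _)
    (fun j => gaussNorm_nonneg (h j)) (hαent c hc) hrec

end Estimates

end

theorem stmt14_general
    (K : Type) [NontriviallyNormedField K] [IsUltrametricDist K]
    (q : ℕ) (hq : IsPrimePow q)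
    (τK : K ≃+* K) (hτK : ∀ x : K, τK x = x ^ q)
    (s : ℕ) (r : ℕ)
    (θ : K) (hθ : ‖θ‖ = q)
    (Dθ : ℕ →₀ MvPowerSeries (Fin s) K)
    (hDθ0 : Dθ 0 = MvPowerSeries.C (σ := Fin s) (R := K) θ)
    (hDθtop : ∀ n : ℕ, r < n → Dθ n = 0)
    (hDθT : ∀ n, IsTate K s (Dθ n))
    (φ : AtsSub K s q θ → (ℕ →₀ MvPowerSeries (Fin s) K))
    (hφ : IsDrinfeldHom K s q θ (twPS K s τK.toRingHom) Dθ φ)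
    (θD : AtsSub K s q θ)
    (hθD : (θD : MvPowerSeries (Fin s) K) = MvPowerSeries.C (σ := Fin s) (R := K) θ)
    (η : AtsSub K s q θ → (ℕ →₀ MvPowerSeries (Fin s) K))
    (hη : IsBider K s q θ (twPS K s τK.toRingHom) φ η)
    (α : ℕ → MvPowerSeries (Fin s) K) (hα0 : α 0 = 1)
    (hαT : ∀ i, IsTate K s (α i))
    (hαrec : ∀ i : ℕ, 1 ≤ i →
      (MvPowerSeries.C (σ := Fin s) (R := K) (θ ^ q ^ i) - MvPowerSeries.C (σ := Fin s) (R := K) θ) * α i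
        = ∑ k ∈ Finset.Icc 1 r,
            if k ≤ i then Dθ k * (⇑(twPS K s τK.toRingHom))^[k] (α (i - k)) else 0) :
    ∃ F : ℕ → MvPowerSeries (Fin s) K,
      (F 0 = 0 ∧ (∀ n, IsTate K s (F n)) ∧
        ∀ i : ℕ, (MvPowerSeries.C (σ := Fin s) (R := K) (θ ^ q ^ i) - MvPowerSeries.C (σ := Fin s) (R := K) θ) * F i
          = ∑ j ∈ Finset.Icc 1 i, η θD j * (⇑(twPS K s τK.toRingHom))^[j] (α (i - j))) ∧
      (∀ M : ℝ, ∃ N : ℕ, ∀ i ≥ N,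
        gaussNorm K s (F i) ≤ (q : ℝ) ^ (-(M * (q : ℝ) ^ i))) ∧
      (∀ a : AtsSub K s q θ, ∀ n : ℕ,
        F n * (⇑(twPS K s τK.toRingHom))^[n] (a : MvPowerSeries (Fin s) K)
            - (a : MvPowerSeries (Fin s) K) * F n
          = ∑ j ∈ Finset.range (n + 1),
              η a j * (⇑(twPS K s τK.toRingHom))^[j] (α (n - j))) ∧
      (∀ F' : ℕ → MvPowerSeries (Fin s) K,
        (F' 0 = 0 ∧ (∀ n, IsTate K s (F' n)) ∧
          ∀ i : ℕ,
            (MvPowerSeries.C (σ := Fin s) (R := K) (θ ^ q ^ i) - MvPowerSeries.C (σ := Fin s) (R := K) θ) * F' i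
              = ∑ j ∈ Finset.Icc 1 i,
                  η θD j * (⇑(twPS K s τK.toRingHom))^[j] (α (i - j))) → F' = F) := by
  have hq2 : 2 ≤ q := hq.two_le
  set tw := twPS K s τK.toRingHom
  set S : ℕ → MvPowerSeries (Fin s) K := fun i => ∑ j ∈ Icc 1 i, η θD j * (⇑tw)^[j] (α (i - j))
  have hS0 : S 0 = 0 := by simp [S]
  set F : ℕ → MvPowerSeries (Fin s) K := fun i => C (θ ^ q ^ i - θ)⁻¹ * S i
  have hF : ∀ i, (C (θ ^ q ^ i) - C θ) * F i = S i := by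
    rintro (_ | i)
    · simp [F, hS0]
    · exact (C_pow_pow_sub_C_mul_eq_iff hq2 hθ (Nat.succ_pos i)).2 rfl
  have hexp : ∀ m, tmulSeries tw Dθ α m = α m * (⇑tw)^[m] (C θ) := fun m => by
    rw [iterate_twPS_C hτK, tmulSeries_eq_of_rec hDθ0 hDθtop hα0 hαrec]
  have hcomm : ∀ n, F n * (⇑tw)^[n] (C θ) - C θ * F n = tmulSeries tw (η θD) α n := fun n => by
    rw [tmulSeries_eq_add_sum_Icc, hη.2.2.1, zero_mul, zero_add, iterate_twPS_C hτK]
    change _ = S n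
    rw [← hF n]
    ring
  have hαent := isEntire_gaussNorm_of_rec hq2 hθ hτK hDθT hαT hαrec
  refine ⟨F, ⟨by simp [F, hS0], fun n => (isTate_C _).mul (isTate_sum _ fun j _ => ?_), hF⟩,
    (isEntire_gaussNorm_of_eq hq2 hθ hτK (hη.2.2.2.1 θD) hαT hαent hF).eventually_le_rpow
      hq.pos,
    comm_sub_eq_tmulSeries (fun x hx => twPS_eq_self_of_mem_FqTSub hτK hx) hφ hη hexp hθD hcomm,
    fun F' ⟨hF'0, _, hF'⟩ => funext fun i => ?_⟩
  · exact (hη.2.2.2.1 θD j).mul ((hαT _).iterate_twPS hτK hq.pos j)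
  · rcases Nat.eq_zero_or_pos i with rfl | hi
    · simp [F, hF'0, hS0]
    · exact (C_pow_pow_sub_C_mul_eq_iff hq2 hθ hi).1 (hF' i)

/-- for a biderivation `η` with `η_θ = Σ_{j≥1} c_j τ^j`, there is a unique
`F_η = Σ_{i≥1} f_i τ^i ∈ τ𝕋_s[[τ]]` with `F_η θ - θ F_η = η_θ exp_φ`, given by
`f_i = (θ^{q^i} - θ)^{-1} Σ_{j=1}^i c_j α_{i-j}^{(j)}`; `F_η` is an entire operator and
satisfies `F_η a - a F_η = η_a exp_φ` for all `a ∈ A[t_1,…,t_s]` (all identities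
expressed coefficient-wise in `𝕋_s[[τ]]`). -/
theorem stmt14
    (K : Type) [NontriviallyNormedField K] [IsUltrametricDist K] [CompleteSpace K]
    (q : ℕ) (hq : IsPrimePow q)
    (τK : K ≃+* K) (hτK : ∀ x : K, τK x = x ^ q)
    (s : ℕ) (r : ℕ) (hr : 0 < r)
    (θ : K) (hθ : ‖θ‖ = q)
    (Dθ : ℕ →₀ MvPowerSeries (Fin s) K)
    (hDθ0 : Dθ 0 = MvPowerSeries.C (σ := Fin s) (R := K) θ)
    (hDθr : Dθ r ≠ 0) (hDθtop : ∀ n : ℕ, r < n → Dθ n = 0)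
    (hDθT : ∀ n, IsTate K s (Dθ n))
    (φ : AtsSub K s q θ → (ℕ →₀ MvPowerSeries (Fin s) K))
    (hφ : IsDrinfeldHom K s q θ (twPS K s τK.toRingHom) Dθ φ)
    (θD : AtsSub K s q θ)
    (hθD : (θD : MvPowerSeries (Fin s) K) = MvPowerSeries.C (σ := Fin s) (R := K) θ)
    (η : AtsSub K s q θ → (ℕ →₀ MvPowerSeries (Fin s) K))
    (hη : IsBider K s q θ (twPS K s τK.toRingHom) φ η)
    (α : ℕ → MvPowerSeries (Fin s) K) (hα0 : α 0 = 1)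
    (hαT : ∀ i, IsTate K s (α i))
    (hαrec : ∀ i : ℕ, 1 ≤ i →
      (MvPowerSeries.C (σ := Fin s) (R := K) (θ ^ q ^ i) - MvPowerSeries.C (σ := Fin s) (R := K) θ) * α i
        = ∑ k ∈ Finset.Icc 1 r,
            if k ≤ i then Dθ k * (⇑(twPS K s τK.toRingHom))^[k] (α (i - k)) else 0) :
    ∃ F : ℕ → MvPowerSeries (Fin s) K,
      (F 0 = 0 ∧ (∀ n, IsTate K s (F n)) ∧
        ∀ i : ℕ, (MvPowerSeries.C (σ := Fin s) (R := K) (θ ^ q ^ i) - MvPowerSeries.C (σ := Fin s) (R := K) θ) * F i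
          = ∑ j ∈ Finset.Icc 1 i, η θD j * (⇑(twPS K s τK.toRingHom))^[j] (α (i - j))) ∧
      (∀ M : ℝ, ∃ N : ℕ, ∀ i ≥ N,
        gaussNorm K s (F i) ≤ (q : ℝ) ^ (-(M * (q : ℝ) ^ i))) ∧
      (∀ a : AtsSub K s q θ, ∀ n : ℕ,
        F n * (⇑(twPS K s τK.toRingHom))^[n] (a : MvPowerSeries (Fin s) K)
            - (a : MvPowerSeries (Fin s) K) * F n
          = ∑ j ∈ Finset.range (n + 1),
              η a j * (⇑(twPS K s τK.toRingHom))^[j] (α (n - j))) ∧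
      (∀ F' : ℕ → MvPowerSeries (Fin s) K,
        (F' 0 = 0 ∧ (∀ n, IsTate K s (F' n)) ∧
          ∀ i : ℕ,
            (MvPowerSeries.C (σ := Fin s) (R := K) (θ ^ q ^ i) - MvPowerSeries.C (σ := Fin s) (R := K) θ) * F' i
              = ∑ j ∈ Finset.Icc 1 i,
                  η θD j * (⇑(twPS K s τK.toRingHom))^[j] (α (i - j))) → F' = F) :=
  stmt14_general K q hq τK hτK s r θ hθ Dθ hDθ0 hDθtop hDθT φ hφ θD hθD η hη α hα0 hαT hαrec
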